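/- Let B = T(V)/(R) be a quadratic algebra with a central regular element z ∈ B_2 such that E = B/Bz is a Koszul Frobenius algebra. Pick r₀ ∈ V⊗V with π(r₀) = z (π: T(V) → B the projection), set R' = kr₀ ⊕ R, so E = T(V)/(R'). If α ∈ R'⊗V ∩ V⊗R' is written as α = v₀⊗r₀ + Σᵢvᵢ⊗rᵢ = r₀⊗v₀' + Σᵢrᵢ⊗vᵢ' with {r₁,...,r_t} a basis of R and vᵢ, vᵢ' ∈ V, then v₀ = v₀'. -/

import Mathlib

/-! Applying `π` to both expressions of `α` kills every term involving `R` and leaves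
`π(v₀) z = z π(v₀')`. Since `z` is central this reads `(π(v₀) - π(v₀')) z = 0`; regularity of `z`
gives `π(v₀ - v₀') = 0`, and injectivity of `π` on `V` gives `v₀ = v₀'`. -/

open TensorProduct

noncomputable section

/-- The linear map `V ⊗ V → T(V)` given by multiplication of the two generators. -/
def mu (k : Type*) [CommRing k] (V : Type*) [AddCommGroup V] [Module k V] :
    V ⊗[k] V →ₗ[k] TensorAlgebra k V :=
  (LinearMap.mul' k (TensorAlgebra k V)).comp
    (TensorProduct.map (TensorAlgebra.ι k) (TensorAlgebra.ι k))

variable {k : Type*} [CommRing k] {V : Type*} [AddCommGroup V] [Module k V]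

/-- `θ : R → k` is a Clifford map if `(θ ⊗ 1 - 1 ⊗ θ)(V⊗R ∩ R⊗V) = 0`. -/
def IsCliffordMap (R : Submodule k (V ⊗[k] V)) (θ : ↥R →ₗ[k] k) : Prop :=
  ∀ (w : V ⊗[k] ↥R) (w' : ↥R ⊗[k] V),
    LinearMap.lTensor V R.subtype w =
      (TensorProduct.assoc k V V V) (LinearMap.rTensor V R.subtype w') →
    (TensorProduct.rid k V) (LinearMap.lTensor V θ w) =
      (TensorProduct.lid k V) (LinearMap.rTensor V θ w')

/-- The relation presenting the quadratic algebra `T(V)/(R)`. -/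
inductive QuadRel (R : Submodule k (V ⊗[k] V)) :
    TensorAlgebra k V → TensorAlgebra k V → Prop
  | of (r : ↥R) : QuadRel R (mu k V (r : V ⊗[k] V)) 0

end

section CubicMonomials

variable (k : Type*) [CommRing k] (V : Type*) [AddCommGroup V] [Module k V]

def mu₁₂ : V ⊗[k] (V ⊗[k] V) →ₗ[k] TensorAlgebra k V :=
  (LinearMap.mul' k (TensorAlgebra k V)).comp (TensorProduct.map (TensorAlgebra.ι k) (mu k V))

def mu₂₁ : (V ⊗[k] V) ⊗[k] V →ₗ[k] TensorAlgebra k V :=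
  (LinearMap.mul' k (TensorAlgebra k V)).comp (TensorProduct.map (mu k V) (TensorAlgebra.ι k))

variable {k V}

@[simp]
theorem mu₁₂_tmul (v : V) (w : V ⊗[k] V) : mu₁₂ k V (v ⊗ₜ w) = TensorAlgebra.ι k v * mu k V w := by
  simp [mu₁₂]

@[simp]
theorem mu₂₁_tmul (w : V ⊗[k] V) (v : V) : mu₂₁ k V (w ⊗ₜ v) = mu k V w * TensorAlgebra.ι k v := by
  simp [mu₂₁]

theorem mu₁₂_assoc (x : (V ⊗[k] V) ⊗[k] V) :
    mu₁₂ k V (TensorProduct.assoc k V V V x) = mu₂₁ k V x := by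
  induction x using TensorProduct.induction_on with
  | zero => simp
  | tmul w v =>
    induction w using TensorProduct.induction_on with
    | zero => simp
    | tmul a b => simp [mu, mul_assoc]
    | add w₁ w₂ h₁ h₂ => simp only [add_tmul, map_add, h₁, h₂]
  | add x y hx hy => simp only [map_add, hx, hy]

variable {A : Type*} [Semiring A] [Algebra k A] (φ : TensorAlgebra k V →ₐ[k] A)
  {R : Submodule k (V ⊗[k] V)}

theorem map_mu₁₂_lTensor_eq_zero (hR : ∀ r ∈ R, φ (mu k V r) = 0) (s : V ⊗[k] ↥R) :
    φ (mu₁₂ k V (LinearMap.lTensor V R.subtype s)) = 0 := by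
  induction s using TensorProduct.induction_on with
  | zero => simp
  | tmul v r => simp [hR r r.2]
  | add x y hx hy => simp only [map_add, hx, hy, add_zero]

theorem map_mu₂₁_rTensor_eq_zero (hR : ∀ r ∈ R, φ (mu k V r) = 0) (s : ↥R ⊗[k] V) :
    φ (mu₂₁ k V (LinearMap.rTensor V R.subtype s)) = 0 := by
  induction s using TensorProduct.induction_on with
  | zero => simp
  | tmul r v => simp [hR r r.2]
  | add x y hx hy => simp only [map_add, hx, hy, add_zero]

theorem map_ι_mul_map_mu_eq_of_lTensor_eq_assoc_rTensor (hR : ∀ r ∈ R, φ (mu k V r) = 0)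
    {r₀ : V ⊗[k] V} {v₀ v₀' : V} {s : V ⊗[k] ↥R} {s' : ↥R ⊗[k] V}
    (heq : v₀ ⊗ₜ[k] r₀ + LinearMap.lTensor V R.subtype s =
      (TensorProduct.assoc k V V V) (r₀ ⊗ₜ[k] v₀' + LinearMap.rTensor V R.subtype s')) :
    φ (TensorAlgebra.ι k v₀) * φ (mu k V r₀) = φ (mu k V r₀) * φ (TensorAlgebra.ι k v₀') := by
  have h := congrArg (fun x => φ (mu₁₂ k V x)) heq
  simpa only [mu₁₂_assoc, map_add, map_mu₁₂_lTensor_eq_zero φ hR, map_mu₂₁_rTensor_eq_zero φ hR,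
    add_zero, mu₁₂_tmul, mu₂₁_tmul, map_mul] using h

end CubicMonomials

theorem stmt14_general (k : Type*) [Field k]
    (V : Type*) [AddCommGroup V] [Module k V]
    (R : Submodule k (V ⊗[k] V)) (r₀ : V ⊗[k] V)
    (z : RingQuot (QuadRel R))
    (hz : z = RingQuot.mkAlgHom k (QuadRel R) (mu k V r₀))
    (hcentral : ∀ b : RingQuot (QuadRel R), z * b = b * z)
    (hregr : ∀ b : RingQuot (QuadRel R), b * z = 0 → b = 0)
    (hinj : ∀ v : V, RingQuot.mkAlgHom k (QuadRel R) (TensorAlgebra.ι k v) = 0 → v = 0)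
    (v₀ v₀' : V) (s : V ⊗[k] ↥R) (s' : ↥R ⊗[k] V)
    (heq : v₀ ⊗ₜ[k] r₀ + LinearMap.lTensor V R.subtype s =
      (TensorProduct.assoc k V V V)
        (r₀ ⊗ₜ[k] v₀' + LinearMap.rTensor V R.subtype s')) :
    v₀ = v₀' := by
  set π := RingQuot.mkAlgHom k (QuadRel R)
  have hπR : ∀ r ∈ R, π (mu k V r) = 0 := fun r hr => by
    simpa using RingQuot.mkAlgHom_rel k (QuadRel.of ⟨r, hr⟩)
  have key := map_ι_mul_map_mu_eq_of_lTensor_eq_assoc_rTensor π hπR heq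
  rw [← hz, hcentral] at key
  have hdiff : π (TensorAlgebra.ι k (v₀ - v₀')) = 0 := by
    rw [map_sub, map_sub]
    exact hregr _ (by rw [sub_mul, key, sub_self])
  exact sub_eq_zero.mp (hinj _ hdiff)

/-- Let `B = T(V)/(R)` be quadratic with a central regular element
`z = π(r₀) ∈ B₂`, and `E = B/Bz = T(V)/(R')` with `R' = kr₀ ⊕ R`.  If
`α = v₀⊗r₀ + Σᵢ vᵢ⊗rᵢ = r₀⊗v₀' + Σᵢ rᵢ⊗vᵢ' ∈ V⊗R' ∩ R'⊗V`, then `v₀ = v₀'`. -/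
theorem stmt14 (k : Type*) [Field k] [CharZero k]
    (V : Type*) [AddCommGroup V] [Module k V] [FiniteDimensional k V]
    (R : Submodule k (V ⊗[k] V)) (r₀ : V ⊗[k] V)
    (hdisj : Submodule.span k {r₀} ⊓ R = ⊥)
    (z : RingQuot (QuadRel R))
    (hz : z = RingQuot.mkAlgHom k (QuadRel R) (mu k V r₀))
    (hcentral : ∀ b : RingQuot (QuadRel R), z * b = b * z)
    (hregl : ∀ b : RingQuot (QuadRel R), z * b = 0 → b = 0)
    (hregr : ∀ b : RingQuot (QuadRel R), b * z = 0 → b = 0)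
    (hinj : ∀ v : V, RingQuot.mkAlgHom k (QuadRel R) (TensorAlgebra.ι k v) = 0 → v = 0)
    (v₀ v₀' : V) (s : V ⊗[k] ↥R) (s' : ↥R ⊗[k] V)
    (heq : v₀ ⊗ₜ[k] r₀ + LinearMap.lTensor V R.subtype s =
      (TensorProduct.assoc k V V V)
        (r₀ ⊗ₜ[k] v₀' + LinearMap.rTensor V R.subtype s')) :
    v₀ = v₀' :=
  stmt14_general k V R r₀ z hz hcentral hregr hinj v₀ v₀' s s' heq
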